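/- arXiv:1705.10544 — 3 statements merged into one kernel-verified Lean document; each statement's English description precedes it below -/
import Mathlib

section
/- For complex numbers ξ_1,...,ξ_N with 0<|ξ_i|<1 and ξ_i ≠ 1, the antisymmetrized sum ∑_{σ∈S_N} sgn(σ) · [∏_{i=0}^{N-2} ((1-ξ_{2+i})/(1-ξ_{σ(2+i)}))^i] · (ξ_{σ(2)} ξ_{σ(3)}^2 ⋯ ξ_{σ(N)}^{N-1}) / [(1-ξ_{σ(2)}⋯ξ_{σ(N)})(1-ξ_{σ(3)}⋯ξ_{σ(N)})⋯(1-ξ_{σ(N)})] equals (1-ξ_1) · ∏_{1≤i<j≤N} (ξ_j-ξ_i)/(1-ξ_i) · ∏_{i=1}^N 1/(1-ξ_i), for all N ≥ 2. -/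
/-!
Split a permutation `σ` of `Fin (n + 1)` by `p = σ 0`, writing `σ (i + 1) = p.succAbove (e i)` with
`e` a permutation of `Fin n`. Apart from the constant `∏ (1 - ξ j) ^ (j - 1)`, the summand becomes
`(-1) ^ p` times a summand of the same shape in the `n` variables `y = ξ ∘ p.succAbove`. Summed over
`e`, the latter gives `(∏ y) Δ(y) / ∏ (1 - y i) ^ n`, with `Δ` the Vandermonde determinant; this is
proved by the same splitting and induction on `n`. Both times the remaining sum over `p` is the
Laplace expansion, along the last column, of `det [y, y², …, yⁿ, (1 - y) ^ m]` for `m = n` or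
`m = n + 1`; expanding `(1 - y) ^ m` binomially, only the powers `y⁰` and `yⁿ⁺¹` survive, giving
`Δ(y)` and `(1 - ∏ y) Δ(y)` respectively.
-/

open Finset Matrix Polynomial

namespace Equiv.Perm

variable {n : ℕ}

/-- Unlike `decomposeFin`, this lists the values on `1, …, n` in increasing order, as needed for
summands whose weights depend on the position. -/
def succAboveCons (p : Fin (n + 1)) (e : Perm (Fin n)) : Perm (Fin (n + 1)) :=
  p.cycleRange⁻¹ * decomposeFin.symm (0, e)

@[simp]
theorem succAboveCons_zero (p : Fin (n + 1)) (e : Perm (Fin n)) : succAboveCons p e 0 = p := by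
  simp [succAboveCons, inv_def]

@[simp]
theorem succAboveCons_succ (p : Fin (n + 1)) (e : Perm (Fin n)) (i : Fin n) :
    succAboveCons p e i.succ = p.succAbove (e i) := by
  simp [succAboveCons, inv_def]

theorem sign_succAboveCons (p : Fin (n + 1)) (e : Perm (Fin n)) :
    sign (succAboveCons p e) = (-1) ^ (p : ℕ) * sign e := by
  simp [succAboveCons, Fin.sign_cycleRange]

theorem succAboveCons_injective :
    Function.Injective fun pe : Fin (n + 1) × Perm (Fin n) => succAboveCons pe.1 pe.2 := by
  rintro ⟨p, e⟩ ⟨p', e'⟩ h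
  simp only at h
  obtain rfl : p = p' := by simpa using congr($h 0)
  refine Prod.ext rfl (ext fun i => (p.succAbove_right_injective ?_ :))
  simpa using congr($h i.succ)

theorem sum_perm_fin_succ {M : Type*} [AddCommMonoid M] (f : Perm (Fin (n + 1)) → M) :
    ∑ σ, f σ = ∑ p, ∑ e : Perm (Fin n), f (succAboveCons p e) := by
  have hbij : Function.Bijective fun pe : Fin (n + 1) × Perm (Fin n) => succAboveCons pe.1 pe.2 :=
    (Fintype.bijective_iff_injective_and_card _).2 ⟨succAboveCons_injective, by
      simp [Fintype.card_perm, Nat.factorial_succ]⟩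
  rw [← hbij.sum_comp, Fintype.sum_prod_type]

end Equiv.Perm

theorem Polynomial.natDegree_one_sub_X_le {R : Type*} [Ring R] : (1 - X : R[X]).natDegree ≤ 1 :=
  natDegree_sub_le_of_le natDegree_one.le natDegree_X_le

namespace Matrix

variable {R : Type*} [CommRing R]

theorem det_updateCol_finset_sum {ι α : Type*} [Fintype ι] [DecidableEq ι] (M : Matrix ι ι R)
    (j : ι) (s : Finset α) (v : α → ι → R) :
    (M.updateCol j (∑ k ∈ s, v k)).det = ∑ k ∈ s, (M.updateCol j (v k)).det := by
  classical
  induction s using Finset.induction_on with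
  | empty => simpa using det_updateCol_smul M j 0 0
  | insert a s ha ih => rw [sum_insert ha, det_updateCol_add, ih, sum_insert ha]

variable {n : ℕ} (y : Fin (n + 1) → R)

theorem det_updateCol_last_pow_eq_zero {k : ℕ} (hk₁ : 1 ≤ k) (hk₂ : k ≤ n) :
    ((of fun i (j : Fin (n + 1)) => y i ^ (j + 1 : ℕ)).updateCol (Fin.last n)
      (fun i => y i ^ k)).det = 0 := by
  have hk : (⟨k - 1, by omega⟩ : Fin (n + 1)) ≠ Fin.last n := by simp [Fin.ext_iff]; omega
  refine det_zero_of_column_eq hk fun i => ?_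
  simp [hk, Nat.sub_add_cancel hk₁]

theorem det_updateCol_last_one :
    ((of fun i (j : Fin (n + 1)) => y i ^ (j + 1 : ℕ)).updateCol (Fin.last n)
      (fun _ => 1)).det = (-1) ^ n * (vandermonde y).det := by
  have h : (of fun i (j : Fin (n + 1)) => y i ^ (j + 1 : ℕ)).updateCol (Fin.last n) (fun _ => 1)
      = (vandermonde y).submatrix id (Fin.cycleRange (Fin.last n)) := by
    ext i j
    rcases (Fin.le_last j).lt_or_eq with hj | rfl
    · simp [hj.ne, Fin.val_add_one_of_lt hj]
    · simp
  rw [h, det_permute', Fin.sign_cycleRange]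
  simp

theorem det_updateCol_last_pow_succ :
    ((of fun i (j : Fin (n + 1)) => y i ^ (j + 1 : ℕ)).updateCol (Fin.last n)
      (fun i => y i ^ (n + 1))).det = (∏ i, y i) * (vandermonde y).det := by
  rw [← det_mul_column]
  congr 1
  ext i j
  rcases (Fin.le_last j).lt_or_eq with hj | rfl
  · simp [hj.ne, pow_succ']
  · simp [pow_succ']

theorem det_updateCol_last_eval (g : R[X]) (hg : g.natDegree ≤ n + 1) :
    ((of fun i (j : Fin (n + 1)) => y i ^ (j + 1 : ℕ)).updateCol (Fin.last n)
      (fun i => g.eval (y i))).det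
      = ((-1) ^ n * g.coeff 0 + g.coeff (n + 1) * ∏ i, y i) * (vandermonde y).det := by
  have hcol : (fun i => g.eval (y i)) = ∑ k ∈ range (n + 2), g.coeff k • fun i => y i ^ k := by
    ext i
    simp [eval_eq_sum_range' (Nat.lt_succ_of_le hg)]
  rw [hcol, det_updateCol_finset_sum, sum_range_succ, sum_range_succ', sum_eq_zero]
  · simp only [det_updateCol_smul, pow_zero, det_updateCol_last_one, det_updateCol_last_pow_succ]
    ring
  · intro k hk
    rw [det_updateCol_smul, det_updateCol_last_pow_eq_zero y (by omega) (by simpa using hk),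
      mul_zero]

theorem det_updateCol_last_eq_sum (v : Fin (n + 1) → R) :
    ((of fun i (j : Fin (n + 1)) => y i ^ (j + 1 : ℕ)).updateCol (Fin.last n) v).det
      = ∑ p : Fin (n + 1), (-1) ^ ((p : ℕ) + n) * v p *
          ((∏ i, y (p.succAbove i)) * (vandermonde fun i => y (p.succAbove i)).det) := by
  rw [det_succ_column _ (Fin.last n)]
  refine sum_congr rfl fun p _ => ?_
  rw [← det_mul_column]
  congr 2
  · simp
  · ext i j
    simp [(Fin.castSucc_lt_last j).ne, pow_succ']

theorem sum_neg_one_pow_mul_eval_mul_det_vandermonde (g : R[X]) (hg : g.natDegree ≤ n + 1) :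
    ∑ p : Fin (n + 1), (-1) ^ (p : ℕ) * (g.eval (y p) *
        ((∏ i, y (p.succAbove i)) * (vandermonde fun i => y (p.succAbove i)).det))
      = (g.coeff 0 + (-1) ^ n * g.coeff (n + 1) * ∏ i, y i) * (vandermonde y).det := by
  have hsq : ((-1 : R) ^ n) ^ 2 = 1 := by rw [← pow_mul, pow_mul', neg_one_sq, one_pow]
  calc _ = (-1) ^ n * ∑ p : Fin (n + 1), (-1) ^ ((p : ℕ) + n) * g.eval (y p) *
        ((∏ i, y (p.succAbove i)) * (vandermonde fun i => y (p.succAbove i)).det) := by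
        rw [mul_sum]
        refine sum_congr rfl fun p _ => ?_
        linear_combination (-(-1) ^ (p : ℕ) * g.eval (y p) *
          ((∏ i, y (p.succAbove i)) * (vandermonde fun i => y (p.succAbove i)).det)) * hsq
    _ = _ := by
        rw [← det_updateCol_last_eq_sum, det_updateCol_last_eval y g hg]
        linear_combination g.coeff 0 * (vandermonde y).det * hsq

theorem sum_neg_one_pow_mul_one_sub_pow_mul_det_vandermonde :
    ∑ p : Fin (n + 1), (-1) ^ (p : ℕ) * ((1 - y p) ^ n *
        ((∏ i, y (p.succAbove i)) * (vandermonde fun i => y (p.succAbove i)).det))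
      = (vandermonde y).det := by
  have hdeg : ((1 - X : R[X]) ^ n).natDegree ≤ n := by
    simpa using natDegree_pow_le_of_le n natDegree_one_sub_X_le
  have h := sum_neg_one_pow_mul_eval_mul_det_vandermonde y ((1 - X) ^ n) (hdeg.trans n.le_succ)
  rw [coeff_eq_zero_of_natDegree_lt (hdeg.trans_lt n.lt_succ_self), coeff_zero_eq_eval_zero] at h
  simpa using h

theorem sum_neg_one_pow_mul_one_sub_pow_succ_mul_det_vandermonde :
    ∑ p : Fin (n + 1), (-1) ^ (p : ℕ) * ((1 - y p) ^ (n + 1) *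
        ((∏ i, y (p.succAbove i)) * (vandermonde fun i => y (p.succAbove i)).det))
      = (1 - ∏ i, y i) * (vandermonde y).det := by
  have hdeg : ((1 - X : R[X]) ^ (n + 1)).natDegree ≤ n + 1 := by
    simpa using natDegree_pow_le_of_le (n + 1) natDegree_one_sub_X_le
  have hlead : ((1 - X : R[X]) ^ (n + 1)).coeff (n + 1) = (-1) ^ (n + 1) := by
    simpa [coeff_one] using coeff_pow_of_natDegree_le (m := n + 1) (natDegree_one_sub_X_le (R := R))
  have h := sum_neg_one_pow_mul_eval_mul_det_vandermonde y ((1 - X) ^ (n + 1)) hdeg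
  rw [hlead, coeff_zero_eq_eval_zero] at h
  simp only [eval_pow, eval_sub, eval_one, eval_X, sub_zero, one_pow] at h
  have hsign : (-1 : R) ^ n * (-1) ^ (n + 1) = -1 := by
    rw [← pow_add, show n + (n + 1) = 2 * n + 1 by ring, pow_succ, pow_mul, neg_one_sq, one_pow,
      one_mul]
  rw [h, hsign]
  ring

end Matrix

section AlternantSum

open Equiv Perm

variable {n : ℕ}

def tailProd {M : Type*} [CommMonoid M] (w : Fin n → M) (k : Fin n) : M :=
  ∏ m, if k ≤ m then w m else 1

theorem tailProd_zero {M : Type*} [CommMonoid M] (w : Fin (n + 1) → M) :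
    tailProd w 0 = ∏ m, w m := by
  simp [tailProd]

theorem tailProd_succ {M : Type*} [CommMonoid M] (w : Fin (n + 1) → M) (k : Fin n) :
    tailProd w k.succ = tailProd (fun m => w m.succ) k := by
  simp [tailProd, Fin.prod_univ_succ, Fin.succ_le_succ_iff]

variable {K : Type*} [Field K]

noncomputable def alternantTerm (y : Fin n → K) (σ : Perm (Fin n)) : K :=
  ((sign σ : ℤ) : K) * (∏ j, y (σ j) ^ (j + 1 : ℕ) / (1 - y (σ j)) ^ (j : ℕ)) /
    ∏ k, (1 - tailProd (fun m => y (σ m)) k)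

theorem alternantTerm_succAboveCons (y : Fin (n + 1) → K) (p : Fin (n + 1)) (e : Perm (Fin n)) :
    alternantTerm y (succAboveCons p e) = (-1) ^ (p : ℕ) *
      (y p * (∏ i, y (p.succAbove i) / (1 - y (p.succAbove i))) / (1 - ∏ i, y i)) *
        alternantTerm (fun i => y (p.succAbove i)) e := by
  set σ := succAboveCons p e
  set z : Fin n → K := fun i => y (p.succAbove i)
  have hnum : ∏ j, y (σ j) ^ (j + 1 : ℕ) / (1 - y (σ j)) ^ (j : ℕ)
      = y p * ((∏ i, z i / (1 - z i)) * ∏ i, z (e i) ^ (i + 1 : ℕ) / (1 - z (e i)) ^ (i : ℕ)) := by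
    rw [Fin.prod_univ_succ, ← Equiv.prod_comp e (fun i => z i / (1 - z i)), ← prod_mul_distrib]
    simp only [σ, succAboveCons_zero, succAboveCons_succ, Fin.val_zero, Fin.val_succ]
    congr 1
    · simp
    · refine prod_congr rfl fun i _ => ?_
      rw [div_mul_div_comm, ← pow_succ', ← pow_succ']
  have hden : ∏ k, (1 - tailProd (fun m => y (σ m)) k)
      = (1 - ∏ i, y i) * ∏ k, (1 - tailProd (fun m => z (e m)) k) := by
    rw [Fin.prod_univ_succ, tailProd_zero, Equiv.prod_comp σ y]
    simp only [tailProd_succ, σ, succAboveCons_succ, z]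
  rw [alternantTerm, alternantTerm, sign_succAboveCons, hnum, hden]
  simp only [z, div_eq_mul_inv, mul_inv]
  push_cast
  ring

variable {𝕜 : Type*} [NormedField 𝕜]

theorem one_sub_ne_zero_of_norm_lt_one {x : 𝕜} (hx : ‖x‖ < 1) : 1 - x ≠ 0 :=
  sub_ne_zero.2 fun h => by simp [← h] at hx

theorem norm_prod_lt_one (y : Fin (n + 1) → 𝕜) (hy : ∀ i, ‖y i‖ < 1) : ‖∏ i, y i‖ < 1 := by
  rw [Fin.prod_univ_succ, norm_mul, norm_prod]
  calc ‖y 0‖ * ∏ i : Fin n, ‖y i.succ‖ ≤ ‖y 0‖ * 1 := by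
        gcongr
        exact prod_le_one (fun _ _ => norm_nonneg _) fun i _ => (hy _).le
    _ < 1 := by simpa using hy 0

theorem sum_alternantTerm (y : Fin n → 𝕜) (hy : ∀ i, ‖y i‖ < 1) :
    ∑ σ, alternantTerm y σ = (∏ i, y i) * (vandermonde y).det / ∏ i, (1 - y i) ^ n := by
  induction n with
  | zero => simp [alternantTerm]
  | succ n ih =>
    have hP : 1 - ∏ i, y i ≠ 0 := one_sub_ne_zero_of_norm_lt_one (norm_prod_lt_one y hy)
    have hterm : ∀ p : Fin (n + 1),
        ∑ e, alternantTerm y (succAboveCons p e) = (-1) ^ (p : ℕ) *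
          ((∏ i, y i) / ((1 - ∏ i, y i) * (∏ i, (1 - y i)) ^ (n + 1)) *
            ((1 - y p) ^ (n + 1) * ((∏ i, y (p.succAbove i)) *
              (vandermonde fun i => y (p.succAbove i)).det))) := by
      intro p
      simp only [alternantTerm_succAboveCons, ← mul_sum, ih _ fun i => hy _]
      have hp : 1 - y p ≠ 0 := one_sub_ne_zero_of_norm_lt_one (hy p)
      have hz : ∏ i, (1 - y (p.succAbove i)) ≠ 0 :=
        prod_ne_zero_iff.2 fun i _ => one_sub_ne_zero_of_norm_lt_one (hy _)
      rw [Fin.prod_univ_succAbove y p] at hP ⊢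
      rw [Fin.prod_univ_succAbove (fun i => 1 - y i) p, prod_pow, prod_div_distrib, mul_pow]
      field_simp
      ring
    rw [sum_perm_fin_succ, Finset.sum_congr rfl fun p _ => hterm p]
    simp only [mul_left_comm ((-1 : 𝕜) ^ _) (_ / _), ← mul_sum,
      sum_neg_one_pow_mul_one_sub_pow_succ_mul_det_vandermonde, prod_pow]
    field_simp

theorem sum_neg_one_pow_mul_sum_alternantTerm_succAbove (y : Fin (n + 1) → 𝕜)
    (hy : ∀ i, ‖y i‖ < 1) :
    ∑ p : Fin (n + 1), (-1) ^ (p : ℕ) * ∑ e, alternantTerm (fun i => y (p.succAbove i)) e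
      = (vandermonde y).det / ∏ i, (1 - y i) ^ n := by
  have hterm : ∀ p : Fin (n + 1), ∑ e, alternantTerm (fun i => y (p.succAbove i)) e
      = ((1 - y p) ^ n * ((∏ i, y (p.succAbove i)) *
          (vandermonde fun i => y (p.succAbove i)).det)) / ∏ i, (1 - y i) ^ n := by
    intro p
    have hp : 1 - y p ≠ 0 := one_sub_ne_zero_of_norm_lt_one (hy p)
    rw [sum_alternantTerm _ fun i => hy _, Fin.prod_univ_succAbove _ p, mul_div_mul_left _ _
      (pow_ne_zero n hp)]
  simp only [hterm, ← mul_div_assoc, ← sum_div,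
    sum_neg_one_pow_mul_one_sub_pow_mul_det_vandermonde]

noncomputable def weightedAlternantTerm (ξ : Fin n → K) (σ : Perm (Fin n)) : K :=
  ((sign σ : ℤ) : K) * (∏ j, ((1 - ξ j) / (1 - ξ (σ j))) ^ (j.val - 1)) *
    ((∏ j, ξ (σ j) ^ j.val) /
      ∏ k : Fin n, (if k.val = 0 then 1 else 1 - tailProd (fun m => ξ (σ m)) k))

theorem weightedAlternantTerm_succAboveCons (ξ : Fin (n + 1) → K) (p : Fin (n + 1))
    (e : Perm (Fin n)) :
    weightedAlternantTerm ξ (succAboveCons p e) = (∏ j, (1 - ξ j) ^ (j.val - 1)) *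
      ((-1) ^ (p : ℕ) * alternantTerm (fun i => ξ (p.succAbove i)) e) := by
  set σ := succAboveCons p e
  set z : Fin n → K := fun i => ξ (p.succAbove i)
  have hweight : ∏ j, ((1 - ξ j) / (1 - ξ (σ j))) ^ (j.val - 1)
      = (∏ j, (1 - ξ j) ^ (j.val - 1)) / ∏ i : Fin n, (1 - z (e i)) ^ (i : ℕ) := by
    simp only [div_pow, prod_div_distrib]
    congr 1
    simp [Fin.prod_univ_succ, σ, z]
  have hnum : ∏ j, ξ (σ j) ^ j.val = ∏ i : Fin n, z (e i) ^ (i + 1 : ℕ) := by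
    simp [Fin.prod_univ_succ, σ, z]
  have hden : ∏ k : Fin (n + 1), (if k.val = 0 then 1 else 1 - tailProd (fun m => ξ (σ m)) k)
      = ∏ k, (1 - tailProd (fun m => z (e m)) k) := by
    simp [Fin.prod_univ_succ, tailProd_succ, σ, z]
  rw [weightedAlternantTerm, alternantTerm, hweight, hnum, hden, sign_succAboveCons]
  simp only [div_eq_mul_inv, prod_mul_distrib, prod_inv_distrib]
  push_cast
  ring

end AlternantSum

theorem Finset.prod_filter_fst_lt_snd {α M : Type*} [LinearOrder α] [Fintype α]
    [LocallyFiniteOrderTop α] [CommMonoid M] (f : α → α → M) :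
    ∏ p ∈ univ.filter (fun p : α × α => p.1 < p.2), f p.1 p.2 = ∏ i, ∏ j ∈ Ioi i, f i j := by
  rw [prod_filter, Fintype.prod_prod_type]
  refine prod_congr rfl fun i _ => ?_
  rw [← prod_filter, filter_lt_eq_Ioi]

theorem prod_fst_lt_snd_sub_div_eq_det_vandermonde_div {K : Type*} [Field K] {N : ℕ}
    (ξ a : Fin N → K) :
    ∏ p ∈ univ.filter (fun p : Fin N × Fin N => p.1 < p.2), ((ξ p.2 - ξ p.1) / a p.1)
      = (vandermonde ξ).det / ∏ i, a i ^ (N - 1 - i) := by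
  rw [prod_filter_fst_lt_snd (fun i j => (ξ j - ξ i) / a i)]
  simp only [prod_div_distrib, prod_const, Fin.card_Ioi, det_vandermonde]

theorem prod_pow_pred_mul_prod_pow_sub_mul_prod {M : Type*} [CommMonoid M] {n : ℕ}
    (a : Fin (n + 1) → M) :
    (∏ j, a j ^ ((j : ℕ) - 1)) * ((∏ j, a j ^ (n - j)) * ∏ j, a j) = a 0 * (∏ j, a j) ^ n := by
  simp only [← prod_mul_distrib, ← prod_pow, ← pow_succ, ← pow_add]
  rw [Fin.prod_univ_succ, Fin.prod_univ_succ, ← mul_assoc, ← pow_succ']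
  congr 1
  · simp
  · refine prod_congr rfl fun i _ => congrArg _ ?_
    simp only [Fin.val_succ]
    omega

theorem stmt0 (N : ℕ) (hN : 2 ≤ N) (ξ : Fin N → ℂ)
    (habs : ∀ i, 0 < ‖ξ i‖ ∧ ‖ξ i‖ < 1) :
    ∑ σ : Equiv.Perm (Fin N),
      ((Equiv.Perm.sign σ : ℤ) : ℂ) *
        (∏ j : Fin N, ((1 - ξ j) / (1 - ξ (σ j))) ^ (j.val - 1)) *
        ((∏ j : Fin N, ξ (σ j) ^ j.val) /
          ∏ k : Fin N, (if k.val = 0 then 1 else 1 - ∏ m : Fin N, (if k ≤ m then ξ (σ m) else 1))) =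
      (1 - ξ ⟨0, by omega⟩) *
        (∏ p ∈ Finset.univ.filter (fun p : Fin N × Fin N => p.1 < p.2),
          ((ξ p.2 - ξ p.1) / (1 - ξ p.1))) *
        ∏ i : Fin N, (1 / (1 - ξ i)) := by
  obtain ⟨n, rfl⟩ : ∃ n, N = n + 1 := ⟨N - 1, by omega⟩
  have hξ : ∀ i, ‖ξ i‖ < 1 := fun i => (habs i).2
  change ∑ σ, weightedAlternantTerm ξ σ = (1 - ξ 0) * _ * _
  simp only [Equiv.Perm.sum_perm_fin_succ, weightedAlternantTerm_succAboveCons, ← mul_sum,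
    sum_neg_one_pow_mul_sum_alternantTerm_succAbove ξ hξ]
  rw [prod_fst_lt_snd_sub_div_eq_det_vandermonde_div ξ fun i => 1 - ξ i, Nat.add_sub_cancel]
  have h1ξ : ∀ i, 1 - ξ i ≠ 0 := fun i => one_sub_ne_zero_of_norm_lt_one (hξ i)
  have hU : ∏ i, (1 - ξ i) ≠ 0 := prod_ne_zero_iff.2 fun i _ => h1ξ i
  have hD : ∏ i : Fin (n + 1), (1 - ξ i) ^ (n - i) ≠ 0 :=
    prod_ne_zero_iff.2 fun i _ => pow_ne_zero _ (h1ξ i)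
  rw [prod_pow]
  simp only [one_div, prod_inv_distrib]
  field_simp
  linear_combination (vandermonde ξ).det * prod_pow_pred_mul_prod_pow_sub_mul_prod fun i => 1 - ξ i
end

section
/- For complex numbers ξ_1,...,ξ_N with all relevant denominators nonzero, ∑_{σ∈S_N} sgn(σ) · 1/[(ξ_{σ(1)}-1)^{N-2}(ξ_{σ(2)}-1)^{N-3}⋯(ξ_{σ(N-2)}-1)] · (ξ_{σ(N-2)} ξ_{σ(N-3)}^2 ⋯ ξ_{σ(1)}^{N-2}) / [(ξ_{σ(1)}⋯ξ_{σ(N-1)}-1)(ξ_{σ(1)}⋯ξ_{σ(N-2)}-1)⋯(ξ_{σ(1)}ξ_{σ(2)}-1)(ξ_{σ(1)}-1)] = ∏_{i=1}^N 1/(ξ_i-1)^{N-1} · ∏_{1≤i<j≤N}(ξ_j-ξ_i), for N ≥ 2. -/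
/-!
Replace `sign σ` by the Vandermonde determinant `Δ(ξ ∘ σ) = sign σ * Δ(ξ)` and let a parameter `t`
multiply every partial product. Sorting the permutations by `p = σ 0` expresses the weighted sum for
`(t, ξ)` through the weighted sums for `(t * ξ p, ξ without ξ p)`, and by induction on `N` it equals
`t Δ(ξ)² / ∏ (ξ i - 1)^(N-2) (t ξ i - 1)`. The induction step comes down to the identity
`∑ i, ξ i^(N-1) ∏_{j ≠ i} (ξ j - 1)(t ξ j - 1) / ((ξ j - ξ i)(t ξ i ξ j - 1)) = 1`,
which is Lagrange interpolation of the constant `1` at the nodes `w i = t ξ i + 1 / ξ i`, evaluated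
at `t + 1` (a vanishing `ξ i` just drops out). At `t = 1`, dividing by `Δ(ξ)` gives the theorem;
when two `ξ i` coincide both sides vanish.
-/

open Finset Matrix Equiv

section Permutations

variable {M α : Type*} [CommMonoid M] {n : ℕ}

theorem Fin.prod_univ_pow_sub_two (g : Fin (n + 1) → M) :
    ∏ j : Fin (n + 1), g j ^ (n + 1 - 2 - j.val) =
      g 0 ^ (n - 1) * ∏ j : Fin n, g j.succ ^ (n - 2 - j.val) := by
  rw [Fin.prod_univ_succ, Fin.val_zero, show n + 1 - 2 - 0 = n - 1 by omega]
  congr 1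
  refine prod_congr rfl fun j _ => ?_
  rw [Fin.val_succ]
  congr 1
  omega

theorem Fin.prod_ite_le_succ (y : Fin (n + 1) → M) (k : Fin n) :
    ∏ m, (if m ≤ k.succ then y m else 1) = y 0 * ∏ m : Fin n, if m ≤ k then y m.succ else 1 := by
  simp [Fin.prod_univ_succ, Fin.succ_le_succ_iff]

theorem Fin.swap_zero_succ_ne (p : Fin (n + 1)) (m : Fin n) : swap 0 p m.succ ≠ p := by
  rw [Ne, swap_apply_eq_iff, swap_apply_right]
  exact m.succ_ne_zero

theorem Fin.exists_swap_zero_succ_eq {p j : Fin (n + 1)} (h : j ≠ p) :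
    ∃ m : Fin n, swap 0 p m.succ = j := by
  have hj : swap 0 p j ≠ 0 := by rwa [Ne, swap_apply_eq_iff, swap_apply_left]
  exact ⟨(swap 0 p j).pred hj, by simp⟩

theorem Fin.prod_tail_comp_swap (x : Fin (n + 1) → α) (p : Fin (n + 1)) (f : α → M) :
    ∏ m, f (Fin.tail (x ∘ swap 0 p) m) = ∏ j ∈ univ.erase p, f (x j) := by
  refine prod_nbij (fun m => swap 0 p m.succ) (by simp [Fin.swap_zero_succ_ne])
    (fun a _ b _ h => by simpa using h) (fun j hj => ?_) (fun _ _ => rfl)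
  obtain ⟨m, rfl⟩ := Fin.exists_swap_zero_succ_eq (mem_erase.1 hj).1
  exact ⟨m, mem_univ m, rfl⟩

theorem comp_decomposeFin_symm (x : Fin (n + 1) → α) (p : Fin (n + 1)) (e : Perm (Fin n)) :
    x ∘ Perm.decomposeFin.symm (p, e) = Fin.cons (x p) (Fin.tail (x ∘ swap 0 p) ∘ e) := by
  ext m
  cases m using Fin.cases <;> simp [Fin.tail]

theorem Equiv.Perm.sum_sign_mul_comp_eq_zero {ι β R : Type*} [Fintype ι] [DecidableEq ι]
    [CommRing R] (f : (ι → β) → R) {x : ι → β} (hx : ¬ Function.Injective x) :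
    ∑ σ : Perm ι, ((Perm.sign σ : ℤ) : R) * f (x ∘ σ) = 0 := by
  obtain ⟨i, j, hxij, hij⟩ : ∃ i j, x i = x j ∧ i ≠ j := by
    simpa [Function.Injective] using hx
  have hswap : x ∘ swap i j = x := by
    ext k
    simp only [Function.comp_apply, swap_apply_def]
    split_ifs <;> simp_all
  refine sum_involution (fun σ _ => swap i j * σ) (fun σ _ => ?_) (fun σ _ _ => ?_)
    (fun _ _ => mem_univ _) (fun σ _ => swap_mul_self_mul i j σ)
  · rw [Perm.sign_mul, Perm.sign_swap hij, Perm.coe_mul, ← Function.comp_assoc, hswap]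
    push_cast
    ring
  · rwa [Ne, mul_eq_right, swap_eq_one_iff]

end Permutations

section Vandermonde

variable {R : Type*} [CommRing R] {n : ℕ}

theorem Matrix.det_vandermonde_comp_perm (x : Fin n → R) (σ : Perm (Fin n)) :
    (vandermonde (x ∘ σ)).det = Perm.sign σ * (vandermonde x).det := by
  rw [show vandermonde (x ∘ σ) = (vandermonde x).submatrix σ id from rfl, det_permute]

theorem Matrix.det_vandermonde_cons (a : R) (z : Fin n → R) :
    (vandermonde (Fin.cons a z : Fin (n + 1) → R)).det =
      (∏ m, (z m - a)) * (vandermonde z).det := by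
  rw [det_vandermonde, det_vandermonde, Fin.prod_univ_succ, Fin.prod_Ioi_zero]
  simp only [Fin.prod_Ioi_succ, Fin.cons_zero, Fin.cons_succ]

theorem Matrix.sq_prod_erase_mul_sq_det_vandermonde_tail (x : Fin (n + 1) → R) (p : Fin (n + 1)) :
    (∏ j ∈ univ.erase p, (x j - x p)) ^ 2 * (vandermonde (Fin.tail (x ∘ Equiv.swap 0 p))).det ^ 2 =
      (vandermonde x).det ^ 2 := by
  have h := det_vandermonde_comp_perm x (Equiv.swap 0 p)
  rw [← Fin.cons_self_tail (x ∘ Equiv.swap 0 p), det_vandermonde_cons, Function.comp_apply,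
    Equiv.swap_apply_left, Fin.prod_tail_comp_swap x p (· - x p)] at h
  rw [← mul_pow, h, mul_pow]
  rcases Int.units_eq_one_or (Perm.sign (Equiv.swap 0 p)) with hs | hs <;> simp [hs]

theorem Matrix.prod_filter_lt_sub_eq_det_vandermonde (x : Fin n → R) :
    ∏ q ∈ univ.filter (fun q : Fin n × Fin n => q.1 < q.2), (x q.2 - x q.1) =
      (vandermonde x).det := by
  rw [det_vandermonde, prod_filter, ← univ_product_univ, prod_product]
  refine prod_congr rfl fun i _ => ?_
  rw [← prod_filter]
  congr 1
  ext j
  simp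

end Vandermonde

section Lagrange

variable {K ι : Type*} [Field K] [DecidableEq ι] {s : Finset ι}

theorem Lagrange.sum_prod_erase_div_eq_one {w : ι → K} (hw : Set.InjOn w s) (hs : s.Nonempty)
    (c : K) : ∑ i ∈ s, ∏ j ∈ s.erase i, (c - w j) / (w i - w j) = 1 := by
  simpa [Polynomial.eval_finsetSum, Lagrange.basis, Polynomial.eval_prod, Lagrange.basisDivisor,
    div_eq_inv_mul] using congrArg (Polynomial.eval c) (Lagrange.sum_basis hw hs)

theorem sum_pow_mul_prod_erase_eq_one_of_ne_zero {x : ι → K} (t : K) (hs : s.Nonempty)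
    (hx : Set.InjOn x s) (hx₀ : ∀ i ∈ s, x i ≠ 0)
    (hxx : ∀ i ∈ s, ∀ j ∈ s, i ≠ j → t * (x i * x j) ≠ 1) :
    ∑ i ∈ s, x i ^ (#s - 1) * ∏ j ∈ s.erase i,
      (x j - 1) * (t * x j - 1) / ((x j - x i) * (t * (x i * x j) - 1)) = 1 := by
  -- the `i`-th term is the Lagrange basis polynomial of the nodes `w` evaluated at `t + 1`
  set w : ι → K := fun i => t * x i + (x i)⁻¹
  have hw : ∀ i ∈ s, ∀ j ∈ s, w i - w j = (x i - x j) * (t * (x i * x j) - 1) / (x i * x j) := by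
    intro i hi j hj
    simp only [w]
    field_simp [hx₀ i hi, hx₀ j hj]
    ring
  have hw_inj : Set.InjOn w s := by
    intro i hi j hj hij
    by_contra hne
    have := hw i hi j hj
    rw [hij, sub_self, eq_comm, div_eq_zero_iff, mul_eq_zero, sub_eq_zero, sub_eq_zero] at this
    rcases this with (h | h) | h
    · exact hne (hx hi hj h)
    · exact hxx i hi j hj hne h
    · exact mul_ne_zero (hx₀ i hi) (hx₀ j hj) h
  refine (sum_congr rfl fun i hi => ?_).trans (Lagrange.sum_prod_erase_div_eq_one hw_inj hs (t + 1))
  rw [← card_erase_of_mem hi, ← prod_const, ← prod_mul_distrib]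
  refine prod_congr rfl fun j hj => ?_
  obtain ⟨hji, hj⟩ := mem_erase.1 hj
  have h₁ : x i - x j ≠ 0 := sub_ne_zero.2 fun h => hji (hx hj hi h.symm)
  have h₁' : x j - x i ≠ 0 := sub_ne_zero.2 fun h => hji (hx hj hi h)
  have h₂ : t * (x i * x j) - 1 ≠ 0 := sub_ne_zero.2 (hxx i hi j hj (Ne.symm hji))
  rw [hw i hi j hj]
  simp only [w]
  field_simp [hx₀ i hi, hx₀ j hj]
  ring

theorem sum_pow_mul_prod_erase_eq_one {x : ι → K} (t : K) (hs : s.Nonempty)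
    (hx : Set.InjOn x s) (hxx : ∀ i ∈ s, ∀ j ∈ s, i ≠ j → t * (x i * x j) ≠ 1) :
    ∑ i ∈ s, x i ^ (#s - 1) * ∏ j ∈ s.erase i,
      (x j - 1) * (t * x j - 1) / ((x j - x i) * (t * (x i * x j) - 1)) = 1 := by
  by_cases hz : ∃ i₀ ∈ s, x i₀ = 0
  swap
  · push Not at hz
    exact sum_pow_mul_prod_erase_eq_one_of_ne_zero t hs hx hz hxx
  obtain ⟨i₀, hi₀, hx₀⟩ := hz
  obtain hs' | hs' := (s.erase i₀).eq_empty_or_nonempty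
  · obtain rfl : s = {i₀} := by simpa [hs.ne_empty] using erase_eq_empty_iff _ _ |>.1 hs'
    simp
  have hne : ∀ i ∈ s.erase i₀, x i ≠ 0 := fun i hi h =>
    (mem_erase.1 hi).1 (hx (mem_of_mem_erase hi) hi₀ (h.trans hx₀.symm))
  have hcard : 2 ≤ #s := by
    have := card_erase_of_mem hi₀ ▸ hs'.card_pos
    omega
  -- the term of `i₀` vanishes, and in the others the factor `j = i₀` is `1 / x i`
  rw [← add_sum_erase s _ hi₀, hx₀, zero_pow (by omega), zero_mul, zero_add]
  refine (sum_congr rfl fun i hi => ?_).trans <| sum_pow_mul_prod_erase_eq_one_of_ne_zero t hs'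
    (hx.mono (erase_subset _ _)) hne fun i hi j hj =>
      hxx i (mem_of_mem_erase hi) j (mem_of_mem_erase hj)
  rw [← mul_prod_erase (s.erase i) _ (mem_erase.2 ⟨Ne.symm (mem_erase.1 hi).1, hi₀⟩),
    erase_right_comm, card_erase_of_mem hi₀, hx₀,
    show x i ^ (#s - 1) = x i ^ (#s - 1 - 1) * x i by rw [← pow_succ]; congr 1; omega]
  field_simp [hne i hi]
  ring

end Lagrange

section PartialProducts

variable {K : Type*} [Field K] {n : ℕ}

/-- The summand of the theorem for `σ = 1`, with every partial product scaled by `t`. -/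
def partialTerm (t : K) {n : ℕ} (y : Fin n → K) : K :=
  (∏ j : Fin n, y j ^ (n - 2 - j.val)) /
    ((∏ j : Fin n, (y j - 1) ^ (n - 2 - j.val)) *
      ∏ k : Fin n, (if k.val = n - 1 then 1
        else t * (∏ m : Fin n, if m ≤ k then y m else 1) - 1))

def PartialProdsNeOne (t : K) {n : ℕ} (x : Fin n → K) : Prop :=
  ∀ (σ : Perm (Fin n)) (k : Fin n), k.val ≠ n - 1 →
    t * (∏ m : Fin n, if m ≤ k then x (σ m) else 1) ≠ 1

theorem partialTerm_cons (hn : n ≠ 0) (t a : K) (z : Fin n → K) :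
    partialTerm t (Fin.cons a z : Fin (n + 1) → K) =
      a ^ (n - 1) / ((a - 1) ^ (n - 1) * (t * a - 1)) * partialTerm (t * a) z := by
  have hden : ∏ k : Fin (n + 1), (if k.val = n + 1 - 1 then 1
        else t * (∏ m, if m ≤ k then (Fin.cons a z : Fin (n + 1) → K) m else 1) - 1) =
      (t * a - 1) * ∏ k : Fin n, (if k.val = n - 1 then 1
        else t * a * (∏ m, if m ≤ k then z m else 1) - 1) := by
    rw [Fin.prod_univ_succ, if_neg (by simpa using Ne.symm hn)]
    congr 1
    · simp
    · refine prod_congr rfl fun k _ => ?_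
      by_cases hk : k.val = n - 1
      · rw [if_pos (by simp; omega), if_pos hk]
      · rw [if_neg (by simp; omega), if_neg hk, Fin.prod_ite_le_succ]
        simp [mul_assoc]
  unfold partialTerm
  rw [Fin.prod_univ_pow_sub_two,
    Fin.prod_univ_pow_sub_two (fun j => (Fin.cons a z : Fin (n + 1) → K) j - 1), hden]
  simp only [Fin.cons_zero, Fin.cons_succ, div_eq_mul_inv, mul_inv]
  ring

namespace PartialProdsNeOne

variable {t : K}

theorem mul_ne_one {x : Fin n → K} (h : PartialProdsNeOne t x) (hn : 2 ≤ n) (i : Fin n) :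
    t * x i ≠ 1 := by
  have : NeZero n := ⟨by omega⟩
  simpa [nonpos_iff_eq_zero] using h (swap 0 i) 0 (by simp; omega)

theorem tail_comp_swap {x : Fin (n + 1) → K} (h : PartialProdsNeOne t x) (p : Fin (n + 1)) :
    PartialProdsNeOne (t * x p) (Fin.tail (x ∘ swap 0 p)) := by
  intro τ k hk
  simpa [Fin.prod_ite_le_succ, mul_assoc, Fin.tail] using
    h (Perm.decomposeFin.symm (p, τ)) k.succ (by simp; omega)

theorem mul_mul_ne_one {x : Fin (n + 1) → K} (h : PartialProdsNeOne t x) (hn : 2 ≤ n)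
    {i j : Fin (n + 1)} (hij : i ≠ j) : t * (x i * x j) ≠ 1 := by
  obtain ⟨m, rfl⟩ := Fin.exists_swap_zero_succ_eq hij.symm
  simpa [mul_assoc, Fin.tail] using (h.tail_comp_swap i).mul_ne_one hn m

end PartialProdsNeOne

end PartialProducts

section VandermondeSum

variable {K : Type*} [Field K] {n : ℕ}

def vandermondeSum (t : K) {n : ℕ} (x : Fin n → K) : K :=
  ∑ σ : Perm (Fin n), (vandermonde (x ∘ σ)).det * partialTerm t (x ∘ σ)

theorem vandermondeSum_eq_det_mul (t : K) (x : Fin n → K) :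
    vandermondeSum t x =
      (vandermonde x).det *
        ∑ σ : Perm (Fin n), ((Perm.sign σ : ℤ) : K) * partialTerm t (x ∘ σ) := by
  rw [vandermondeSum, mul_sum]
  refine sum_congr rfl fun σ _ => ?_
  rw [det_vandermonde_comp_perm]
  ring

theorem vandermondeSum_fin_one (t : K) (x : Fin 1 → K) : vandermondeSum t x = 1 := by
  simp [vandermondeSum, partialTerm]

theorem vandermondeSum_succ (hn : n ≠ 0) (t : K) (x : Fin (n + 1) → K) :
    vandermondeSum t x = ∑ p, (∏ j ∈ univ.erase p, (x j - x p)) *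
      (x p ^ (n - 1) / ((x p - 1) ^ (n - 1) * (t * x p - 1))) *
        vandermondeSum (t * x p) (Fin.tail (x ∘ swap 0 p)) := by
  rw [vandermondeSum, ← Perm.decomposeFin.symm.sum_comp, Fintype.sum_prod_type]
  refine sum_congr rfl fun p _ => ?_
  rw [vandermondeSum, mul_sum]
  refine sum_congr rfl fun e _ => ?_
  set y := Fin.tail (x ∘ swap 0 p)
  have hA : ∏ m, ((y ∘ e) m - x p) = ∏ j ∈ univ.erase p, (x j - x p) :=
    (Equiv.prod_comp e (fun m => y m - x p)).trans (Fin.prod_tail_comp_swap x p (· - x p))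
  rw [comp_decomposeFin_symm, det_vandermonde_cons, partialTerm_cons hn, hA]
  ring

end VandermondeSum

section ClosedForm

variable {K : Type*} [Field K] {n : ℕ} {t : K}

/-- After the induction hypothesis, the `p`-th summand of `vandermondeSum_succ` is the closed form
times the `p`-th term of `sum_pow_mul_prod_erase_eq_one`. -/
theorem vandermondeSum_succ_summand_eq (hn : 2 ≤ n) {x : Fin (n + 1) → K} (hx : ∀ i, x i ≠ 1)
    (h : PartialProdsNeOne t x) (hinj : Function.Injective x) (p : Fin (n + 1)) :
    (∏ j ∈ univ.erase p, (x j - x p)) * (x p ^ (n - 1) / ((x p - 1) ^ (n - 1) * (t * x p - 1))) *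
      (t * x p * (vandermonde (Fin.tail (x ∘ swap 0 p))).det ^ 2 /
        ∏ m, ((Fin.tail (x ∘ swap 0 p) m - 1) ^ (n - 2) *
          (t * x p * Fin.tail (x ∘ swap 0 p) m - 1))) =
    t * (vandermonde x).det ^ 2 / (∏ i, ((x i - 1) ^ (n - 1) * (t * x i - 1))) *
      (x p ^ n * ∏ j ∈ univ.erase p,
        (x j - 1) * (t * x j - 1) / ((x j - x p) * (t * (x p * x j) - 1))) := by
  have hj : ∀ j ∈ univ.erase p,
      x j - 1 ≠ 0 ∧ t * x j - 1 ≠ 0 ∧ x j - x p ≠ 0 ∧ t * (x p * x j) - 1 ≠ 0 := by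
    intro j hj
    have hjp := (mem_erase.1 hj).1
    exact ⟨sub_ne_zero.2 (hx j), sub_ne_zero.2 (h.mul_ne_one (by omega) j),
      sub_ne_zero.2 (hinj.ne hjp), sub_ne_zero.2 (h.mul_mul_ne_one hn hjp.symm)⟩
  rw [Fin.prod_tail_comp_swap x p (fun a => (a - 1) ^ (n - 2) * (t * x p * a - 1))]
  simp only [mul_assoc t (x p)]
  have hkey : (∏ j ∈ univ.erase p,
        (x j - 1) * (t * x j - 1) / ((x j - x p) * (t * (x p * x j) - 1))) *
      (∏ j ∈ univ.erase p, ((x j - 1) ^ (n - 2) * (t * (x p * x j) - 1))) *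
      ∏ j ∈ univ.erase p, (x j - x p) =
      ∏ j ∈ univ.erase p, ((x j - 1) ^ (n - 1) * (t * x j - 1)) := by
    rw [← prod_mul_distrib, ← prod_mul_distrib]
    refine prod_congr rfl fun j hj' => ?_
    obtain ⟨h₁, h₂, h₃, h₄⟩ := hj j hj'
    rw [show n - 1 = n - 2 + 1 by omega, pow_succ, div_mul_eq_mul_div, div_mul_eq_mul_div,
      div_eq_iff (mul_ne_zero h₃ h₄)]
    ring
  have hL : ∏ j ∈ univ.erase p,
      (x j - 1) * (t * x j - 1) / ((x j - x p) * (t * (x p * x j) - 1)) ≠ 0 :=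
    prod_ne_zero_iff.2 fun j hj' => by
      obtain ⟨h₁, h₂, h₃, h₄⟩ := hj j hj'
      exact div_ne_zero (mul_ne_zero h₁ h₂) (mul_ne_zero h₃ h₄)
  have hD : ∏ j ∈ univ.erase p, ((x j - 1) ^ (n - 2) * (t * (x p * x j) - 1)) ≠ 0 :=
    prod_ne_zero_iff.2 fun j hj' => mul_ne_zero (pow_ne_zero _ (hj j hj').1) (hj j hj').2.2.2
  have hA : ∏ j ∈ univ.erase p, (x j - x p) ≠ 0 := prod_ne_zero_iff.2 fun j hj' => (hj j hj').2.2.1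
  have hp₁ : x p - 1 ≠ 0 := sub_ne_zero.2 (hx p)
  have hp₂ : t * x p - 1 ≠ 0 := sub_ne_zero.2 (h.mul_ne_one (by omega) p)
  rw [← sq_prod_erase_mul_sq_det_vandermonde_tail x p,
    ← mul_prod_erase univ (fun i => (x i - 1) ^ (n - 1) * (t * x i - 1)) (mem_univ p), ← hkey,
    show x p ^ n = x p ^ (n - 1) * x p by rw [← pow_succ]; congr 1; omega]
  generalize ∏ j ∈ univ.erase p, (x j - 1) * (t * x j - 1) / ((x j - x p) * (t * (x p * x j) - 1))
    = L at hL ⊢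
  generalize ∏ j ∈ univ.erase p, ((x j - 1) ^ (n - 2) * (t * (x p * x j) - 1)) = D at hD ⊢
  generalize ∏ j ∈ univ.erase p, (x j - x p) = A at hA ⊢
  field_simp

theorem vandermondeSum_eq (hn : 2 ≤ n) {x : Fin n → K} (hx : ∀ i, x i ≠ 1)
    (h : PartialProdsNeOne t x) :
    vandermondeSum t x =
      t * (vandermonde x).det ^ 2 / ∏ i, ((x i - 1) ^ (n - 2) * (t * x i - 1)) := by
  induction n, hn using Nat.le_induction generalizing t with
  | base =>
    have h₀ := sub_ne_zero.2 (h.mul_ne_one le_rfl 0)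
    have h₁ := sub_ne_zero.2 (h.mul_ne_one le_rfl 1)
    have he₀ : univ.erase (0 : Fin (1 + 1)) = {1} := by decide
    have he₁ : univ.erase (1 : Fin (1 + 1)) = {0} := by decide
    rw [vandermondeSum_succ one_ne_zero, Fin.sum_univ_succ, Fin.sum_univ_one, Fin.prod_univ_succ,
      Fin.prod_univ_one, Fin.succ_zero_eq_one, det_fin_two]
    simp only [vandermondeSum_fin_one, he₀, he₁, prod_singleton, vandermonde_apply, Fin.val_zero,
      Fin.val_one, pow_one, Nat.sub_self, pow_zero, one_mul, mul_one, mul_one_div]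
    rw [div_add_div _ _ h₀ h₁]
    ring
  | succ n hn ih =>
    have hIH := fun p => ih (x := Fin.tail (x ∘ swap 0 p)) (fun _ => hx _) (h.tail_comp_swap p)
    rw [vandermondeSum_succ (by omega), show n + 1 - 2 = n - 1 by omega]
    simp only [hIH]
    by_cases hV : (vandermonde x).det = 0
    · refine (sum_eq_zero fun p _ => ?_).trans (by simp [hV])
      have hA : (∏ j ∈ univ.erase p, (x j - x p)) *
          (vandermonde (Fin.tail (x ∘ swap 0 p))).det = 0 := by
        simpa [hV, ← mul_pow] using sq_prod_erase_mul_sq_det_vandermonde_tail x p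
      rcases mul_eq_zero.1 hA with hA | hA <;> simp [hA]
    · have hinj := det_vandermonde_ne_zero_iff.1 hV
      have hL := sum_pow_mul_prod_erase_eq_one t univ_nonempty hinj.injOn
        fun i _ j _ hij => h.mul_mul_ne_one hn hij
      rw [card_univ, Fintype.card_fin, Nat.add_sub_cancel] at hL
      simp_rw [vandermondeSum_succ_summand_eq hn hx h hinj, ← mul_sum, hL, mul_one]

end ClosedForm

theorem sum_sign_mul_partialTerm_eq {K : Type*} [Field K] {n : ℕ} (hn : 2 ≤ n) {t : K}
    {x : Fin n → K} (hx : ∀ i, x i ≠ 1) (h : PartialProdsNeOne t x) :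
    ∑ σ : Perm (Fin n), ((Perm.sign σ : ℤ) : K) * partialTerm t (x ∘ σ) =
      t * (vandermonde x).det / ∏ i, ((x i - 1) ^ (n - 2) * (t * x i - 1)) := by
  by_cases hinj : Function.Injective x
  · have hV := det_vandermonde_ne_zero_iff.2 hinj
    apply mul_left_cancel₀ hV
    rw [← vandermondeSum_eq_det_mul, vandermondeSum_eq hn hx h]
    ring
  · rw [Perm.sum_sign_mul_comp_eq_zero _ hinj,
      det_vandermonde_ne_zero_iff.not_right.2 hinj, mul_zero, zero_div]

theorem stmt2 (N : ℕ) (hN : 2 ≤ N) (ξ : Fin N → ℂ)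
    (hne : ∀ i, ξ i ≠ 1)
    (hprod : ∀ (σ : Equiv.Perm (Fin N)) (k : Fin N), k.val ≠ N - 1 →
      (∏ m : Fin N, if m ≤ k then ξ (σ m) else 1) ≠ 1) :
    ∑ σ : Equiv.Perm (Fin N),
      ((Equiv.Perm.sign σ : ℤ) : ℂ) *
        ((∏ j : Fin N, ξ (σ j) ^ (N - 2 - j.val)) /
          ((∏ j : Fin N, (ξ (σ j) - 1) ^ (N - 2 - j.val)) *
            ∏ k : Fin N, (if k.val = N - 1 then 1
              else (∏ m : Fin N, (if m ≤ k then ξ (σ m) else 1)) - 1))) =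
      (∏ i : Fin N, (1 / (ξ i - 1) ^ (N - 1))) *
        ∏ p ∈ Finset.univ.filter (fun p : Fin N × Fin N => p.1 < p.2), (ξ p.2 - ξ p.1) := by
  have h : PartialProdsNeOne (1 : ℂ) ξ := fun σ k hk => by simpa only [one_mul] using hprod σ k hk
  have hpow : ∀ i, (ξ i - 1) ^ (N - 2) * (ξ i - 1) = (ξ i - 1) ^ (N - 1) := fun i => by
    rw [← pow_succ, show N - 2 + 1 = N - 1 by omega]
  have key := sum_sign_mul_partialTerm_eq hN hne h
  simp only [partialTerm, one_mul, Function.comp_apply, hpow] at key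
  rw [key, prod_filter_lt_sub_eq_det_vandermonde, prod_div_distrib, prod_const_one,
    one_div_mul_eq_div]
end

section
/- Let ξ_1,...,ξ_N be complex numbers ≠ 1, and for a permutation σ ∈ S_N define A_σ = T_{a_n} ⋯ T_{a_1} where σ = T_{a_n} ⋯ T_{a_1} is any word in the adjacent transpositions T_i, and T_i carries the appropriate spectral parameters determined by the word. Then the (2^{N-1}+1, 2^{N-1}+1) entry of A_σ equals sgn(σ) · ∏_{i=0}^{N-2} ((1-ξ_{2+i})/(1-ξ_{σ(2+i)}))^i, for N ≥ 2. -/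
noncomputable def Smat (a b : ℂ) : Matrix (Fin 4) (Fin 4) ℂ :=
  !![-((1 - b) / (1 - a)), 0, 0, 0;
     0, -((1 - b) / (1 - a)), (b - a) / (1 - a), 0;
     0, 0, -1, 0;
     0, 0, 0, -((1 - b) / (1 - a))]

noncomputable def Tmat (N l : ℕ) (M : Matrix (Fin 4) (Fin 4) ℂ) :
    Matrix (Fin (2 ^ N)) (Fin (2 ^ N)) ℂ := fun x y =>
  if x.val / 2 ^ (N - l + 1) = y.val / 2 ^ (N - l + 1) ∧
      x.val % 2 ^ (N - l - 1) = y.val % 2 ^ (N - l - 1) then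
    M ⟨x.val / 2 ^ (N - l - 1) % 4, Nat.mod_lt _ (by norm_num)⟩
      ⟨y.val / 2 ^ (N - l - 1) % 4, Nat.mod_lt _ (by norm_num)⟩
  else 0

/-- Given a word `w = [a_n, …, a_1]` in the adjacent transpositions
(the rightmost letter applied first), `Amat N ξ w` returns the pair
`(σ, A_σ)`, where `σ = T_{a_n} ⋯ T_{a_1}` and `A_σ = 𝐓_{a_n} ⋯ 𝐓_{a_1}`,
each factor `𝐓_i` carrying the spectral parameters `α = ξ_{σ'(i)}`,
`β = ξ_{σ'(i+1)}` determined by the partial permutation `σ'` built so far. -/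
noncomputable def Amat (N : ℕ) (ξ : Fin N → ℂ) :
    List (Fin (N - 1)) → Equiv.Perm (Fin N) × Matrix (Fin (2 ^ N)) (Fin (2 ^ N)) ℂ
  | [] => (1, 1)
  | k :: rest =>
    let p := Amat N ξ rest
    (p.1 * Equiv.swap ⟨k.val, by have := k.isLt; omega⟩ ⟨k.val + 1, by have := k.isLt; omega⟩,
     Tmat N (k.val + 1)
        (Smat (ξ (p.1 ⟨k.val, by have := k.isLt; omega⟩))
          (ξ (p.1 ⟨k.val + 1, by have := k.isLt; omega⟩))) * p.2)

/-!
Each factor `Tmat N l (Smat α β)` is upper triangular for the numeric order of the basis, because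
`Smat α β` is and the factor acts on the two binary digits of sites `l, l + 1`. Hence `A_σ` is upper
triangular and its diagonal entry at `2 ^ (N - 1)` (site 1 flipped, all others not) is the product of
the factors' diagonal entries there: `Smat` at index 2, i.e. `-1`, when `l = 1`, and `Smat` at index 0,
i.e. `-(1 - β) / (1 - α)`, when `l ≥ 2`. The closed form obeys the same recursion under
`σ ↦ σ * swap`: the sign flips, and only the factors `j = l - 1, l` (0-based) change, with exponents
`0, 0` when `l = 1` and consecutive exponents when `l ≥ 2`.
-/

open Finset Equiv

theorem Matrix.IsUpperTriangular.mul_apply_self {n R : Type*} [Fintype n] [LinearOrder n]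
    [NonUnitalNonAssocSemiring R] {A B : Matrix n n R} (hA : A.IsUpperTriangular)
    (hB : B.IsUpperTriangular) (i : n) : (A * B) i i = A i i * B i i := by
  rw [Matrix.mul_apply]
  refine Finset.sum_eq_single i (fun j _ hji => ?_) (by simp)
  rcases hji.lt_or_gt with hlt | hgt
  · rw [hA hlt, zero_mul]
  · rw [hB hgt, mul_zero]

theorem Nat.div_mod_lt_div_mod_of_lt {x y m c : ℕ} (hq : x / (m * c) = y / (m * c))
    (hr : x % m = y % m) (h : y < x) : y / m % c < x / m % c := by
  have hdiv : y / m < x / m := by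
    by_contra! hle
    have hmul := Nat.mul_le_mul_left m hle
    have hx := Nat.div_add_mod x m
    have hy := Nat.div_add_mod y m
    omega
  rw [← Nat.div_div_eq_div_mul, ← Nat.div_div_eq_div_mul] at hq
  have hx := Nat.div_add_mod (x / m) c
  have hy := Nat.div_add_mod (y / m) c
  rw [hq] at hx
  omega

theorem Fintype.prod_comp_swap_pow_mul {α M : Type*} [Fintype α] [DecidableEq α] [CommMonoid M]
    (f : α → M) (e : α → ℕ) {a b : α} (hab : a ≠ b) (he : e b = e a + 1) :
    (∏ j, f (swap a b j) ^ e j) * f b = (∏ j, f j ^ e j) * f a := by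
  have hb : b ∈ univ.erase a := mem_erase.mpr ⟨hab.symm, mem_univ b⟩
  have hsplit (g : α → M) : ∏ j, g j = g a * (g b * ∏ j ∈ (univ.erase a).erase b, g j) := by
    rw [mul_prod_erase _ _ hb, mul_prod_erase _ _ (mem_univ a)]
  have hrest : ∏ j ∈ (univ.erase a).erase b, f (swap a b j) ^ e j
      = ∏ j ∈ (univ.erase a).erase b, f j ^ e j := by
    refine Finset.prod_congr rfl fun j hj => ?_
    simp only [mem_erase] at hj
    rw [swap_apply_of_ne_of_ne hj.2.1 hj.1]
  rw [hsplit fun j => f (swap a b j) ^ e j, hsplit fun j => f j ^ e j, hrest, swap_apply_left,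
    swap_apply_right, he, pow_succ, pow_succ]
  ac_rfl

theorem Fintype.prod_comp_swap_of_eq {α β M : Type*} [Fintype α] [DecidableEq α] [CommMonoid M]
    (F : α → β → M) (σ : α → β) {a b : α} (hF : F a = F b) :
    ∏ j, F j (σ (swap a b j)) = ∏ j, F j (σ j) := by
  have hFswap : ∀ j, F (swap a b j) = F j := fun j => by
    rcases eq_or_ne j a with rfl | hja
    · rw [swap_apply_left, hF]
    rcases eq_or_ne j b with rfl | hjb
    · rw [swap_apply_right, hF]
    · rw [swap_apply_of_ne_of_ne hja hjb]
  rw [← Equiv.prod_comp (swap a b) fun j => F j (σ (swap a b j))]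
  simp only [swap_apply_self, hFswap]

section SignedRatioProd

variable {K : Type*} [Field K] {N : ℕ} (ξ : Fin N → K)

def signedRatioProd (σ : Perm (Fin N)) : K :=
  ((Perm.sign σ : ℤ) : K) * ∏ j : Fin N, ((1 - ξ j) / (1 - ξ (σ j))) ^ (j.val - 1)

variable {ξ}

theorem signedRatioProd_one (hξ : ∀ i, ξ i ≠ 1) : signedRatioProd ξ 1 = 1 := by
  simp [signedRatioProd, div_self, sub_ne_zero, (hξ _).symm]

theorem signedRatioProd_mul_swap_of_val_eq_zero (σ : Perm (Fin N)) {a b : Fin N} (ha : a.val = 0)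
    (hb : b.val = 1) : signedRatioProd ξ (σ * swap a b) = -signedRatioProd ξ σ := by
  have hab : a ≠ b := fun h => by simp [h, hb] at ha
  have hexp : (fun t => ((1 - ξ a) / (1 - ξ t)) ^ (a.val - 1))
      = fun t => ((1 - ξ b) / (1 - ξ t)) ^ (b.val - 1) := by
    simp [ha, hb]
  simp only [signedRatioProd, Perm.sign_mul, Perm.sign_swap hab, Perm.mul_apply,
    Fintype.prod_comp_swap_of_eq (fun j t => ((1 - ξ j) / (1 - ξ t)) ^ (j.val - 1)) σ hexp]
  push_cast
  ring

theorem signedRatioProd_mul_swap_of_val_eq_succ (hξ : ∀ i, ξ i ≠ 1) (σ : Perm (Fin N)) {a b : Fin N}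
    (ha : a.val ≠ 0) (hb : b.val = a.val + 1) :
    signedRatioProd ξ (σ * swap a b) = -((1 - ξ (σ b)) / (1 - ξ (σ a))) * signedRatioProd ξ σ := by
  have hab : a ≠ b := fun h => by simp [h] at hb
  have hne (i : Fin N) : 1 - ξ i ≠ 0 := sub_ne_zero.mpr (hξ i).symm
  have hsplit (τ : Fin N → Fin N) : ∏ j : Fin N, ((1 - ξ j) / (1 - ξ (τ j))) ^ (j.val - 1)
      = (∏ j : Fin N, (1 - ξ j) ^ (j.val - 1)) / ∏ j : Fin N, (1 - ξ (τ j)) ^ (j.val - 1) := by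
    rw [← Finset.prod_div_distrib]
    exact Finset.prod_congr rfl fun j _ => div_pow _ _ _
  have hdenom := Fintype.prod_comp_swap_pow_mul (fun t => 1 - ξ (σ t)) (fun j : Fin N => j.val - 1)
    hab (by omega)
  have hprod_ne (τ : Fin N → Fin N) : ∏ j : Fin N, (1 - ξ (τ j)) ^ (j.val - 1) ≠ 0 :=
    Finset.prod_ne_zero_iff.mpr fun j _ => pow_ne_zero _ (hne _)
  simp only [signedRatioProd, hsplit, Perm.sign_mul, Perm.sign_swap hab, Perm.mul_apply]
  have hσ := hprod_ne σ
  have hσ_swap : ∏ j : Fin N, (1 - ξ (σ (swap a b j))) ^ (j.val - 1) ≠ 0 := hprod_ne _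
  have hσa := hne (σ a)
  have hσb := hne (σ b)
  field_simp
  push_cast
  linear_combination ((Perm.sign σ : ℤ) : K) * (∏ j : Fin N, (1 - ξ j) ^ (j.val - 1)) * hdenom

end SignedRatioProd

theorem smat_isUpperTriangular (a b : ℂ) : (Smat a b).IsUpperTriangular := by
  intro i j h
  fin_cases i <;> fin_cases j <;> first | rfl | simp at h

theorem smat_apply_two_two (a b : ℂ) : Smat a b 2 2 = -1 := rfl

theorem smat_apply_zero_zero (a b : ℂ) : Smat a b 0 0 = -((1 - b) / (1 - a)) := rfl

theorem tmat_isUpperTriangular {N l : ℕ} (hl : l < N) {M : Matrix (Fin 4) (Fin 4) ℂ}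
    (hM : M.IsUpperTriangular) : (Tmat N l M).IsUpperTriangular := by
  intro x y hyx
  simp only [Tmat]
  split_ifs with hblock
  · obtain ⟨hq, hr⟩ := hblock
    rw [show N - l + 1 = (N - l - 1) + 2 by omega, pow_add] at hq
    exact hM (Nat.div_mod_lt_div_mod_of_lt hq hr hyx)
  · rfl

theorem tmat_apply_two_pow_pred {N l : ℕ} (hl : l < N) (M : Matrix (Fin 4) (Fin 4) ℂ)
    (hx : 2 ^ (N - 1) < 2 ^ N) :
    Tmat N l M ⟨2 ^ (N - 1), hx⟩ ⟨2 ^ (N - 1), hx⟩ =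
      M ⟨2 ^ l % 4, Nat.mod_lt _ (by norm_num)⟩ ⟨2 ^ l % 4, Nat.mod_lt _ (by norm_num)⟩ := by
  have hdiv : 2 ^ (N - 1) / 2 ^ (N - l - 1) = 2 ^ l := by
    rw [Nat.pow_div (by omega) (by norm_num), show N - 1 - (N - l - 1) = l by omega]
  simp [Tmat, hdiv]

theorem amat_isUpperTriangular (N : ℕ) (ξ : Fin N → ℂ) (w : List (Fin (N - 1))) :
    (Amat N ξ w).2.IsUpperTriangular := by
  induction w with
  | nil => exact Matrix.blockTriangular_one
  | cons k w ih =>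
    exact (tmat_isUpperTriangular (by have := k.isLt; omega) (smat_isUpperTriangular _ _)).mul ih

theorem signedRatioProd_mul_swap {N : ℕ} {ξ : Fin N → ℂ} (hξ : ∀ i, ξ i ≠ 1) (σ : Perm (Fin N))
    (k : Fin (N - 1)) :
    signedRatioProd ξ (σ * swap ⟨k.val, by omega⟩ ⟨k.val + 1, by omega⟩) =
      Smat (ξ (σ ⟨k.val, by omega⟩)) (ξ (σ ⟨k.val + 1, by omega⟩))
          ⟨2 ^ (k.val + 1) % 4, Nat.mod_lt _ (by norm_num)⟩
          ⟨2 ^ (k.val + 1) % 4, Nat.mod_lt _ (by norm_num)⟩ *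
        signedRatioProd ξ σ := by
  rcases eq_or_ne k.val 0 with hk | hk
  · have hidx : (⟨2 ^ (k.val + 1) % 4, Nat.mod_lt _ (by norm_num)⟩ : Fin 4) = 2 :=
      Fin.ext (by simp [hk])
    rw [hidx, smat_apply_two_two, neg_one_mul]
    exact signedRatioProd_mul_swap_of_val_eq_zero σ hk (by simp [hk])
  · have hidx : (⟨2 ^ (k.val + 1) % 4, Nat.mod_lt _ (by norm_num)⟩ : Fin 4) = 0 := by
      refine Fin.ext ?_
      rw [show k.val + 1 = (k.val - 1) + 2 by omega, pow_add]
      simp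
    rw [hidx, smat_apply_zero_zero]
    exact signedRatioProd_mul_swap_of_val_eq_succ hξ σ hk rfl

theorem stmt14 (N : ℕ) (hN : 2 ≤ N) (ξ : Fin N → ℂ) (hξ : ∀ i, ξ i ≠ 1)
    (w : List (Fin (N - 1))) :
    (Amat N ξ w).2
        ⟨2 ^ (N - 1), Nat.pow_lt_pow_right one_lt_two (by omega)⟩
        ⟨2 ^ (N - 1), Nat.pow_lt_pow_right one_lt_two (by omega)⟩ =
      ((Equiv.Perm.sign (Amat N ξ w).1 : ℤ) : ℂ) *
        ∏ j : Fin N, ((1 - ξ j) / (1 - ξ ((Amat N ξ w).1 j))) ^ (j.val - 1) := by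
  change _ = signedRatioProd ξ (Amat N ξ w).1
  induction w with
  | nil => simp [Amat, signedRatioProd_one hξ]
  | cons k w ih =>
    have hl : k.val + 1 < N := by omega
    simp only [Amat]
    rw [(tmat_isUpperTriangular hl (smat_isUpperTriangular _ _)).mul_apply_self
      (amat_isUpperTriangular N ξ w), ih, tmat_apply_two_pow_pred hl]
    exact (signedRatioProd_mul_swap hξ _ k).symm
end
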